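/- Let η, γ ∈ ℂ^l and suppose a function g(u) on (ℂ^×)^l satisfies, for constants β_0, β_1, …, β_d: ∑_j θ_j g = −β_0 g and ∑_j m_{ij} θ_j g = −β_i g for i = 1,…,d (θ_j = u_j ∂/∂u_j), where the joint kernel of the linear functionals (1,…,1) and rows of (m_{ij}) on ℂ^l is spanned by γ. Then g(u) = u^η h(z) where z = u^γ = ∏ u_j^{γ_j}, η is any solution of ∑ η_j = −β_0, ∑ m_{ij} η_j = −β_i, and h is a function of one variable. Moreover, if g additionally satisfies ∏_{γ_j>0} ∂_j^{γ_j} g = ∏_{γ_j<0} ∂_j^{−γ_j} g, then h is annihilated by the hypergeometric-type operator Γ ∏_{γ_i>0} ∏_{j=0}^{γ_i−1}(θ + (η_i − j)/γ_i) − z ∏_{γ_i<0} ∏_{j=0}^{−γ_i−1}(θ + (η_i − j)/γ_i), where θ = z d/dz and Γ = ∏ γ_i^{γ_i}. -/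

import Mathlib

open Finset

/-- Logarithmic partial `∂/∂u_j` (ordinary partial derivative) of a function on `ℂ^l`. -/
noncomputable def partialDeriv (l : ℕ) (j : Fin l) (f : (Fin l → ℂ) → ℂ) :
    (Fin l → ℂ) → ℂ :=
  fun u => fderiv ℂ f u (Pi.single j 1)

/-- Iterated partial derivatives `∏_j ∂_j^{e_j}` (exponents `e_j ≥ 0`). -/
noncomputable def boxOp (l : ℕ) (e : Fin l → ℕ) (f : (Fin l → ℂ) → ℂ) :
    (Fin l → ℂ) → ℂ :=
  (List.finRange l).foldr (fun j F => (partialDeriv l j)^[e j] F) f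

/-- The one–variable operator `θ + c` with `θ = z d/dz`. -/
noncomputable def thetaAdd (c : ℂ) (f : ℂ → ℂ) : ℂ → ℂ :=
  fun z => z * deriv f z + c * f z

/-- The list of shifts `(η_i − j)/γ_i`, `0 ≤ j < e_i`, used in the factored
hypergeometric operator. -/
noncomputable def shiftList (l : ℕ) (γ η : Fin l → ℤ) (e : Fin l → ℕ) : List ℂ :=
  (List.finRange l).foldr
    (fun i acc =>
      ((List.range (e i)).map fun j => ((η i : ℂ) - (j : ℂ)) / (γ i : ℂ)) ++ acc) []

/-!
In logarithmic coordinates `u = exp x` the Euler operators `θ_j` become `∂/∂x_j`, so the Euler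
equations say that the gradient of `x ↦ g(e^x) e^{-η·x}` lies in the joint kernel, i.e. is
parallel to `γ`. This function is therefore constant on the hyperplanes `γ·x = const`, and with
Bézout coefficients `γ·a = 1` the function `h(z) = z^{-η·a} g(z^a)` satisfies
`g(u) = u^η h(u^γ)`.

For `f = u^μ F(u^γ)` one has `∂_j f = u^{μ - e_j} γ_j (θ + μ_j/γ_j) F (u^γ)`, so each side of the
box equation is a monomial times a product of the commuting operators `θ + (η_i - j)/γ_i` applied
to `h`. The two monomials differ by `u^γ = z`, the factor `z` of the hypergeometric operator.
-/

section ThetaOperators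

variable {F G : ℂ → ℂ} {S : Set ℂ}

theorem AnalyticAt.thetaAdd {z : ℂ} (c : ℂ) (hF : AnalyticAt ℂ F z) :
    AnalyticAt ℂ (thetaAdd c F) z :=
  (analyticAt_id.mul hF.deriv).add (analyticAt_const.mul hF)

theorem AnalyticOnNhd.foldr_thetaAdd (hF : AnalyticOnNhd ℂ F S) (L : List ℂ) :
    AnalyticOnNhd ℂ (L.foldr thetaAdd F) S := by
  induction L with
  | nil => exact hF
  | cons c L ih => exact fun z hz => (ih z hz).thetaAdd c

theorem thetaAdd_const_mul (c a : ℂ) :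
    thetaAdd c (fun z => a * F z) = fun z => a * thetaAdd c F z := by
  funext z
  simp only [thetaAdd, deriv_const_mul_field']
  ring

theorem foldr_thetaAdd_const_mul (a : ℂ) (L : List ℂ) :
    L.foldr thetaAdd (fun z => a * F z) = fun z => a * L.foldr thetaAdd F z := by
  induction L with
  | nil => rfl
  | cons c L ih => rw [List.foldr_cons, ih, thetaAdd_const_mul, List.foldr_cons]

theorem Set.EqOn.thetaAdd (hS : IsOpen S) (h : S.EqOn F G) (c : ℂ) :
    S.EqOn (thetaAdd c F) (thetaAdd c G) := fun z hz => by
  have hFG : F =ᶠ[nhds z] G := Filter.eventuallyEq_of_mem (hS.mem_nhds hz) h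
  simp only [_root_.thetaAdd, hFG.deriv_eq, h hz]

theorem deriv_thetaAdd {z : ℂ} (c : ℂ) (hF : AnalyticAt ℂ F z) :
    deriv (thetaAdd c F) z = deriv F z + z * deriv (deriv F) z + c * deriv F z := by
  have hF' := hF.deriv.differentiableAt
  unfold thetaAdd
  rw [deriv_fun_add (differentiableAt_fun_id.fun_mul hF') (hF.differentiableAt.const_mul c),
    deriv_fun_mul differentiableAt_fun_id hF', deriv_const_mul c hF.differentiableAt, deriv_id'']
  ring

theorem thetaAdd_comm {z : ℂ} (a b : ℂ) (hF : AnalyticAt ℂ F z) :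
    thetaAdd a (thetaAdd b F) z = thetaAdd b (thetaAdd a F) z := by
  change z * deriv (thetaAdd b F) z + a * thetaAdd b F z
    = z * deriv (thetaAdd a F) z + b * thetaAdd a F z
  rw [deriv_thetaAdd b hF, deriv_thetaAdd a hF]
  simp only [thetaAdd]
  ring

theorem foldr_thetaAdd_perm (hS : IsOpen S) (hF : AnalyticOnNhd ℂ F S) {L₁ L₂ : List ℂ}
    (hp : L₁.Perm L₂) : S.EqOn (L₁.foldr thetaAdd F) (L₂.foldr thetaAdd F) := by
  induction hp with
  | nil => exact Set.eqOn_refl _ _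
  | cons c _ ih => exact ih.thetaAdd hS c
  | swap a b L => exact fun z hz => thetaAdd_comm b a (hF.foldr_thetaAdd L z hz)
  | trans _ _ ih₁ ih₂ => exact ih₁.trans ih₂

end ThetaOperators

section LaurentMonomials

theorem prod_zpow_eq_zpow_sum {ι G : Type*} [CommGroupWithZero G] (s : Finset ι) (f : ι → ℤ)
    {z : G} (hz : z ≠ 0) : ∏ i ∈ s, z ^ f i = z ^ ∑ i ∈ s, f i := by
  induction s using Finset.cons_induction with
  | empty => simp
  | cons i s hi ih => rw [prod_cons, sum_cons, zpow_add₀ hz, ih]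

variable {l : ℕ}

def torus (l : ℕ) : Set (Fin l → ℂ) := {u | ∀ j, u j ≠ 0}

theorem isOpen_torus : IsOpen (torus l) := by
  have : torus l = ⋂ j, (fun u => u j) ⁻¹' {0}ᶜ := by ext; simp [torus]
  exact this ▸ isOpen_iInter_of_finite fun j =>
    isOpen_compl_singleton.preimage (continuous_apply j)

noncomputable def laurentMonomial (μ : Fin l → ℤ) (u : Fin l → ℂ) : ℂ :=
  ∏ j, u j ^ μ j

variable {μ ν : Fin l → ℤ} {u : Fin l → ℂ}

theorem laurentMonomial_ne_zero (hu : u ∈ torus l) : laurentMonomial μ u ≠ 0 :=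
  prod_ne_zero_iff.2 fun j _ => zpow_ne_zero _ (hu j)

theorem laurentMonomial_add (hu : u ∈ torus l) :
    laurentMonomial (μ + ν) u = laurentMonomial μ u * laurentMonomial ν u := by
  simp only [laurentMonomial, Pi.add_apply, zpow_add₀ (hu _), prod_mul_distrib]

theorem laurentMonomial_zero : laurentMonomial 0 u = 1 := by
  simp [laurentMonomial]

theorem laurentMonomial_zpow {z : ℂ} (hz : z ≠ 0) (a : Fin l → ℤ) :
    laurentMonomial μ (fun j => z ^ a j) = z ^ ∑ j, a j * μ j := by
  simp only [laurentMonomial, ← zpow_mul, prod_zpow_eq_zpow_sum _ _ hz]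

theorem laurentMonomial_sub_single (j : Fin l) :
    laurentMonomial (μ - Pi.single j 1) u =
      u j ^ (μ j - 1) * ∏ i ∈ univ.erase j, u i ^ μ i := by
  rw [laurentMonomial, ← mul_prod_erase _ _ (mem_univ j)]
  congr 1
  · simp
  · refine prod_congr rfl fun i hi => ?_
    simp [Pi.single_eq_of_ne (ne_of_mem_erase hi)]

theorem analyticOnNhd_laurentMonomial : AnalyticOnNhd ℂ (laurentMonomial μ) (torus l) :=
  fun u hu => univ.analyticAt_fun_prod fun j _ => by
    exact ((ContinuousLinearMap.proj j : (Fin l → ℂ) →L[ℂ] ℂ).analyticAt u).zpow (hu j)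

theorem hasFDerivAt_laurentMonomial (hu : u ∈ torus l) :
    HasFDerivAt (laurentMonomial μ)
      (∑ j, (μ j * laurentMonomial (μ - Pi.single j 1) u) •
        (ContinuousLinearMap.proj j : (Fin l → ℂ) →L[ℂ] ℂ)) u := by
  have hcoord : ∀ j ∈ univ, HasFDerivAt (fun v : Fin l → ℂ => v j ^ μ j)
      ((μ j * u j ^ (μ j - 1)) •
        (ContinuousLinearMap.proj j : (Fin l → ℂ) →L[ℂ] ℂ)) u :=
    fun j _ => by
      exact (hasDerivAt_zpow (μ j) (u j) (Or.inl (hu j))).comp_hasFDerivAt u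
        (hasFDerivAt_apply (𝕜 := ℂ) j u)
  refine (HasFDerivAt.finsetProd hcoord).congr_fderiv (sum_congr rfl fun j _ => ?_)
  rw [smul_smul, laurentMonomial_sub_single]
  ring_nf

theorem partialDeriv_laurentMonomial (hu : u ∈ torus l) (j : Fin l) :
    partialDeriv l j (laurentMonomial μ) u = μ j * laurentMonomial (μ - Pi.single j 1) u := by
  rw [partialDeriv, (hasFDerivAt_laurentMonomial hu).fderiv, _root_.sum_apply,
    sum_eq_single j (fun i _ hij => by simp [Pi.single_eq_of_ne hij]) (by simp)]
  simp

end LaurentMonomials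

section PartialDerivatives

variable {l : ℕ} {f φ : (Fin l → ℂ) → ℂ} {u : Fin l → ℂ}

theorem partialDeriv_mul (hf : DifferentiableAt ℂ f u) (hφ : DifferentiableAt ℂ φ u)
    (j : Fin l) :
    partialDeriv l j (fun v => f v * φ v) u =
      f u * partialDeriv l j φ u + φ u * partialDeriv l j f u := by
  simp [partialDeriv, fderiv_fun_mul hf hφ]

theorem partialDeriv_comp {F : ℂ → ℂ} (hF : DifferentiableAt ℂ F (φ u))
    (hφ : DifferentiableAt ℂ φ u) (j : Fin l) :
    partialDeriv l j (fun v => F (φ v)) u = deriv F (φ u) * partialDeriv l j φ u := by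
  have hchain : fderiv ℂ (fun v => F (φ v)) u = deriv F (φ u) • fderiv ℂ φ u :=
    (hF.hasDerivAt.comp_hasFDerivAt u hφ.hasFDerivAt).fderiv
  rw [partialDeriv, partialDeriv, hchain]
  rfl

theorem Set.EqOn.partialDeriv_eq (hf : (torus l).EqOn f φ) (hu : u ∈ torus l) (j : Fin l) :
    partialDeriv l j f u = partialDeriv l j φ u := by
  simp only [partialDeriv, (Filter.eventuallyEq_of_mem (isOpen_torus.mem_nhds hu) hf).fderiv_eq]

variable {γ μ : Fin l → ℤ} {F : ℂ → ℂ}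

theorem partialDeriv_eqOn_laurentMonomial_mul_comp (hF : AnalyticOnNhd ℂ F {0}ᶜ)
    (hf : (torus l).EqOn f fun u => laurentMonomial μ u * F (laurentMonomial γ u))
    {j : Fin l} (hγj : γ j ≠ 0) :
    (torus l).EqOn (partialDeriv l j f) fun u =>
      laurentMonomial (μ - Pi.single j 1) u *
        (γ j * thetaAdd (μ j / γ j) F (laurentMonomial γ u)) := by
  intro u hu
  have hFz := (hF _ (laurentMonomial_ne_zero (μ := γ) hu)).differentiableAt
  have hM {ν : Fin l → ℤ} : DifferentiableAt ℂ (laurentMonomial ν) u :=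
    (analyticOnNhd_laurentMonomial u hu).differentiableAt
  have hshift : laurentMonomial (μ - Pi.single j 1) u * laurentMonomial γ u =
      laurentMonomial μ u * laurentMonomial (γ - Pi.single j 1) u := by
    rw [← laurentMonomial_add hu, ← laurentMonomial_add hu]
    congr 1
    abel
  have hγ : (γ j : ℂ) * (μ j / γ j) = μ j := mul_div_cancel₀ _ (Int.cast_ne_zero.2 hγj)
  rw [hf.partialDeriv_eq hu,
    partialDeriv_mul (φ := fun v => F (laurentMonomial γ v)) hM (hFz.comp u hM),
    partialDeriv_comp hFz hM,
    partialDeriv_laurentMonomial hu, partialDeriv_laurentMonomial hu]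
  simp only [thetaAdd]
  linear_combination (γ j * deriv F (laurentMonomial γ u)) * hshift.symm
    - laurentMonomial (μ - Pi.single j 1) u * F (laurentMonomial γ u) * hγ

end PartialDerivatives

section IteratedPartialDerivatives

variable {l : ℕ} {f : (Fin l → ℂ) → ℂ} {γ μ : Fin l → ℤ} {F : ℂ → ℂ}

theorem iterate_partialDeriv_eqOn (hF : AnalyticOnNhd ℂ F {0}ᶜ)
    (hf : (torus l).EqOn f fun u => laurentMonomial μ u * F (laurentMonomial γ u))
    {j : Fin l} (hγj : γ j ≠ 0) (k : ℕ) :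
    (torus l).EqOn ((partialDeriv l j)^[k] f) fun u =>
      laurentMonomial (μ - Pi.single j (k : ℤ)) u *
        (γ j ^ k * ((List.range k).map fun t : ℕ => ((μ j : ℂ) - t) / γ j).foldr thetaAdd F
          (laurentMonomial γ u)) := by
  induction k with
  | zero => simpa using hf
  | succ k ih =>
    set L := (List.range k).map fun t : ℕ => ((μ j : ℂ) - t) / γ j
    set c := ((μ j : ℂ) - k) / γ j
    have hFL : AnalyticOnNhd ℂ (fun z => (γ j : ℂ) ^ k * L.foldr thetaAdd F z) {0}ᶜ :=
      fun z hz => analyticAt_const.mul (hF.foldr_thetaAdd L z hz)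
    have hexp :
        μ - Pi.single j (k : ℤ) - Pi.single j 1 = μ - Pi.single j ((k + 1 : ℕ) : ℤ) := by
      rw [sub_sub, ← Pi.single_add]
      push_cast
      rfl
    have hc : ((μ - Pi.single j (k : ℤ) : Fin l → ℤ) j : ℂ) / γ j = c := by simp [c]
    have hlist :
        (List.range (k + 1)).map (fun t : ℕ => ((μ j : ℂ) - t) / γ j) = L ++ [c] := by
      simp [L, c, List.range_succ]
    intro u hu
    -- The factor `θ + c` of the new derivative is applied last, but sits at the end of the list.
    have hperm := foldr_thetaAdd_perm isOpen_compl_singleton hF (List.perm_append_singleton c L)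
      (laurentMonomial_ne_zero (μ := γ) hu)
    rw [Function.iterate_succ_apply', partialDeriv_eqOn_laurentMonomial_mul_comp hFL ih hγj hu,
      hexp, hc, thetaAdd_const_mul]
    beta_reduce
    rw [hlist, hperm, List.foldr_cons, pow_succ]
    ring

theorem foldr_iterate_partialDeriv_eqOn (hF : AnalyticOnNhd ℂ F {0}ᶜ)
    (hf : (torus l).EqOn f fun u => laurentMonomial μ u * F (laurentMonomial γ u))
    (hγ : ∀ j, γ j ≠ 0) (e : Fin l → ℕ) {L : List (Fin l)} (hL : L.Nodup) :
    (torus l).EqOn (L.foldr (fun j g => (partialDeriv l j)^[e j] g) f) fun u =>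
      laurentMonomial (μ - fun i => if i ∈ L then (e i : ℤ) else 0) u *
        ((∏ i ∈ L.toFinset, (γ i : ℂ) ^ e i) *
          (L.foldr
            (fun i acc => ((List.range (e i)).map fun t : ℕ => ((μ i : ℂ) - t) / γ i) ++ acc)
            []).foldr thetaAdd F (laurentMonomial γ u)) := by
  induction L with
  | nil =>
    have hμ : (μ - fun _ => (0 : ℤ)) = μ := sub_zero μ
    simpa [hμ] using hf
  | cons j L ih =>
    obtain ⟨hjL, hL⟩ := List.nodup_cons.1 hL
    set S := L.foldr
      (fun i acc => ((List.range (e i)).map fun t : ℕ => ((μ i : ℂ) - t) / γ i) ++ acc) []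
    set C := ∏ i ∈ L.toFinset, (γ i : ℂ) ^ e i
    have hFL : AnalyticOnNhd ℂ (fun z => C * S.foldr thetaAdd F z) {0}ᶜ :=
      fun z hz => analyticAt_const.mul (hF.foldr_thetaAdd S z hz)
    have hμj : (μ - fun i => if i ∈ L then (e i : ℤ) else 0) j = μ j := by simp [hjL]
    have hexp : (μ - fun i => if i ∈ L then (e i : ℤ) else 0) - Pi.single j (e j : ℤ) =
        μ - fun i => if i ∈ j :: L then (e i : ℤ) else 0 := by
      funext i
      by_cases hij : i = j
      · subst hij; simp [hjL]
      · simp [hij]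
    have hC : ∏ i ∈ (j :: L).toFinset, (γ i : ℂ) ^ e i = γ j ^ e j * C := by
      rw [List.toFinset_cons, prod_insert (by simpa using hjL)]
    intro u hu
    rw [List.foldr_cons, iterate_partialDeriv_eqOn hFL (ih hL) (hγ j) (e j) hu]
    beta_reduce
    rw [hexp, hμj, foldr_thetaAdd_const_mul, hC, List.foldr_cons, List.foldr_append]
    ring

theorem boxOp_eqOn (hF : AnalyticOnNhd ℂ F {0}ᶜ)
    (hf : (torus l).EqOn f fun u => laurentMonomial μ u * F (laurentMonomial γ u))
    (hγ : ∀ j, γ j ≠ 0) (e : Fin l → ℕ) :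
    (torus l).EqOn (boxOp l e f) fun u =>
      laurentMonomial (μ - fun i => (e i : ℤ)) u *
        ((∏ i, (γ i : ℂ) ^ e i) *
          (shiftList l γ μ e).foldr thetaAdd F (laurentMonomial γ u)) := by
  have h := foldr_iterate_partialDeriv_eqOn hF hf hγ e (List.nodup_finRange l)
  -- `shiftList` runs `List.range` through the list monad, as a list of complex numbers.
  have hshift : shiftList l γ μ e = (List.finRange l).foldr
      (fun i acc => ((List.range (e i)).map fun t : ℕ => ((μ i : ℂ) - t) / γ i) ++ acc) [] := by
    simp [shiftList, ← List.map_eq_flatMap, Function.comp_def]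
  simp only [List.mem_finRange, if_true, List.toFinset_finRange] at h
  rw [hshift]
  exact h

end IteratedPartialDerivatives

section LogarithmicCoordinates

variable {l : ℕ}

theorem ContinuousLinearMap.apply_eq_sum_mul_single {ι 𝕜 : Type*} [Fintype ι] [DecidableEq ι]
    [NormedField 𝕜] (L : (ι → 𝕜) →L[𝕜] 𝕜) (v : ι → 𝕜) :
    L v = ∑ j, v j * L (Pi.single j 1) := by
  conv_lhs => rw [← univ_sum_single v]
  refine (map_sum L _ _).trans (sum_congr rfl fun j _ => ?_)
  rw [← smul_eq_mul, ← map_smul, ← Pi.single_smul, smul_eq_mul, mul_one]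

theorem eq_of_partialDeriv_parallel {φ : (Fin l → ℂ) → ℂ} (hφ : Differentiable ℂ φ)
    (w : Fin l → ℂ) (hpar : ∀ x, ∃ c : ℂ, ∀ j, partialDeriv l j φ x = c * w j) {x y : Fin l → ℂ}
    (hxy : ∑ j, w j * x j = ∑ j, w j * y j) : φ x = φ y := by
  have hdir : ∀ p, fderiv ℂ φ p (y - x) = 0 := by
    intro p
    obtain ⟨c, hc⟩ := hpar p
    calc fderiv ℂ φ p (y - x) = ∑ j, (y j - x j) * (c * w j) := by
          simp only [ContinuousLinearMap.apply_eq_sum_mul_single _ (y - x), Pi.sub_apply]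
          exact sum_congr rfl fun j _ => by rw [← hc j]; rfl
      _ = c * (∑ j, w j * y j - ∑ j, w j * x j) := by
          rw [mul_sub, mul_sum, mul_sum, ← sum_sub_distrib]
          exact sum_congr rfl fun j _ => by ring
      _ = 0 := by rw [hxy, sub_self, mul_zero]
  have hline : ∀ s : ℂ, HasDerivAt (fun s : ℂ => φ (x + s • (y - x))) 0 s := fun s => by
    rw [← hdir (x + s • (y - x))]
    refine (hφ _).hasFDerivAt.comp_hasDerivAt s ?_
    simpa using ((hasDerivAt_id s).smul_const (y - x)).const_add x
  simpa using is_const_of_deriv_eq_zero (fun s => (hline s).differentiableAt)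
    (fun s => (hline s).deriv) 0 1

noncomputable def expCoord (x : Fin l → ℂ) : Fin l → ℂ := fun j => Complex.exp (x j)

theorem expCoord_mem_torus (x : Fin l → ℂ) : expCoord x ∈ torus l :=
  fun _ => Complex.exp_ne_zero _

theorem laurentMonomial_expCoord (μ : Fin l → ℤ) (x : Fin l → ℂ) :
    laurentMonomial μ (expCoord x) = Complex.exp (∑ j, μ j * x j) := by
  simp [laurentMonomial, expCoord, Complex.exp_sum, ← Complex.exp_int_mul]

theorem hasFDerivAt_expCoord (x : Fin l → ℂ) :
    HasFDerivAt expCoord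
      (ContinuousLinearMap.pi fun j =>
        Complex.exp (x j) • (ContinuousLinearMap.proj j : (Fin l → ℂ) →L[ℂ] ℂ)) x := by
  refine hasFDerivAt_pi'' fun j => ?_
  rw [ContinuousLinearMap.proj_pi]
  exact (Complex.hasDerivAt_exp (x j)).comp_hasFDerivAt x (hasFDerivAt_apply (𝕜 := ℂ) j x)

theorem partialDeriv_comp_expCoord {g : (Fin l → ℂ) → ℂ} {x : Fin l → ℂ}
    (hg : DifferentiableAt ℂ g (expCoord x)) (j : Fin l) :
    partialDeriv l j (fun y => g (expCoord y)) x =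
      expCoord x j * partialDeriv l j g (expCoord x) := by
  have hchain : fderiv ℂ (fun y => g (expCoord y)) x = (fderiv ℂ g (expCoord x)).comp
      (ContinuousLinearMap.pi fun i =>
        Complex.exp (x i) • (ContinuousLinearMap.proj i : (Fin l → ℂ) →L[ℂ] ℂ)) :=
    (hg.hasFDerivAt.comp x (hasFDerivAt_expCoord x)).fderiv
  have hdir : (ContinuousLinearMap.pi fun i =>
        Complex.exp (x i) • (ContinuousLinearMap.proj i : (Fin l → ℂ) →L[ℂ] ℂ))
      (Pi.single j 1) = Complex.exp (x j) • Pi.single j 1 := by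
    ext i
    by_cases hij : i = j
    · subst hij; simp
    · simp [Pi.single_eq_of_ne hij]
  rw [partialDeriv, partialDeriv, hchain, ContinuousLinearMap.comp_apply,
    hdir, map_smul, smul_eq_mul]
  rfl

end LogarithmicCoordinates

section Reduction

variable {l : ℕ} {g : (Fin l → ℂ) → ℂ} {u : Fin l → ℂ}

theorem mul_laurentMonomial_sub_single {μ : Fin l → ℤ} (hu : u ∈ torus l) (j : Fin l) :
    u j * laurentMonomial (μ - Pi.single j 1) u = laurentMonomial μ u := by
  rw [laurentMonomial_sub_single, ← mul_assoc, ← zpow_one_add₀ (hu j), add_sub_cancel,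
    laurentMonomial, ← mul_prod_erase _ _ (mem_univ j)]

theorem mul_partialDeriv_mul_laurentMonomial {μ : Fin l → ℤ} (hg : DifferentiableAt ℂ g u)
    (hu : u ∈ torus l) (j : Fin l) :
    u j * partialDeriv l j (fun v => g v * laurentMonomial μ v) u =
      laurentMonomial μ u * (u j * partialDeriv l j g u + μ j * g u) := by
  rw [partialDeriv_mul hg (analyticOnNhd_laurentMonomial u hu).differentiableAt,
    partialDeriv_laurentMonomial hu, ← mul_laurentMonomial_sub_single (μ := μ) hu j]
  ring

theorem exists_eqOn_laurentMonomial_mul_comp {γ η : Fin l → ℤ} (hgcd : univ.gcd γ = 1)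
    (hg : AnalyticOnNhd ℂ g (torus l))
    (hpar : ∀ u ∈ torus l, ∃ c : ℂ, ∀ j,
      u j * partialDeriv l j g u - η j * g u = c * γ j) :
    ∃ h : ℂ → ℂ, AnalyticOnNhd ℂ h {0}ᶜ ∧
      (torus l).EqOn g fun u => laurentMonomial η u * h (laurentMonomial γ u) := by
  obtain ⟨a, ha⟩ := univ.gcd_eq_sum_mul γ
  have ha : ∑ j, (γ j : ℂ) * a j = 1 := by exact_mod_cast (hgcd ▸ ha).symm
  set G : (Fin l → ℂ) → ℂ := fun u => g u * laurentMonomial (-η) u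
  have hG : AnalyticOnNhd ℂ G (torus l) :=
    fun u hu => (hg u hu).mul (analyticOnNhd_laurentMonomial u hu)
  have hGE : ∀ x y : Fin l → ℂ, ∑ j, (γ j : ℂ) * x j = ∑ j, (γ j : ℂ) * y j →
      G (expCoord x) = G (expCoord y) := by
    refine fun x y => eq_of_partialDeriv_parallel (φ := fun x => G (expCoord x))
      (fun x => ((hG _ (expCoord_mem_torus x)).differentiableAt.comp x
        (hasFDerivAt_expCoord x).differentiableAt)) _ fun x => ?_
    obtain ⟨c, hc⟩ := hpar _ (expCoord_mem_torus x)
    refine ⟨laurentMonomial (-η) (expCoord x) * c, fun j => ?_⟩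
    rw [partialDeriv_comp_expCoord (hG _ (expCoord_mem_torus x)).differentiableAt,
      mul_partialDeriv_mul_laurentMonomial (hg _ (expCoord_mem_torus x)).differentiableAt
        (expCoord_mem_torus x), mul_assoc, ← hc j, Pi.neg_apply, Int.cast_neg]
    ring
  refine ⟨fun z => G fun j => z ^ a j, fun z hz => ?_, fun u hu => ?_⟩
  · exact (hG _ fun j => zpow_ne_zero _ hz).comp
      (AnalyticAt.pi fun j => analyticAt_id.zpow hz)
  · set x : Fin l → ℂ := fun j => Complex.log (u j)
    set s := ∑ j, (γ j : ℂ) * x j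
    have hux : expCoord x = u := funext fun j => Complex.exp_log (hu j)
    have hs : Complex.exp s = laurentMonomial γ u := by
      rw [← hux, laurentMonomial_expCoord]
    have hsa : expCoord (fun j => s * a j) = fun j => laurentMonomial γ u ^ a j := by
      funext j
      rw [expCoord, mul_comm, Complex.exp_int_mul, hs]
    have hline : ∑ j, (γ j : ℂ) * (s * a j) = s := by
      simp_rw [mul_left_comm _ s, ← mul_sum, ha, mul_one]
    have hgG : g u = laurentMonomial η u * G u := by
      rw [mul_left_comm, ← laurentMonomial_add hu, add_neg_cancel, laurentMonomial_zero, mul_one]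
    change g u = laurentMonomial η u * G fun j => laurentMonomial γ u ^ a j
    rw [hgG, ← hsa, hGE _ x hline, hux]

theorem exists_sub_mul_eq_mul_of_kernel {l d : ℕ} {γ η : Fin l → ℤ} {m : Fin d → Fin l → ℂ}
    {β0 : ℂ} {βv : Fin d → ℂ}
    (hker : ∀ w : Fin l → ℂ, ((∑ j, w j = 0) ∧ ∀ i, ∑ j, m i j * w j = 0) →
      ∃ c : ℂ, w = fun j => c * (γ j : ℂ))
    (hη0 : ∑ j, (η j : ℂ) = -β0) (hηi : ∀ i, ∑ j, m i j * (η j : ℂ) = -βv i)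
    {v : Fin l → ℂ} {t : ℂ} (hv0 : ∑ j, v j = -β0 * t)
    (hvi : ∀ i, ∑ j, m i j * v j = -βv i * t) :
    ∃ c : ℂ, ∀ j, v j - η j * t = c * γ j := by
  have h0 : ∑ j, (v j - η j * t) = 0 := by
    rw [sum_sub_distrib, ← sum_mul, hv0, hη0]
    ring
  have hi : ∀ i, ∑ j, m i j * (v j - η j * t) = 0 := fun i => by
    simp_rw [mul_sub, sum_sub_distrib, ← mul_assoc, ← sum_mul, hvi, hηi]
    ring
  obtain ⟨c, hc⟩ := hker _ ⟨h0, hi⟩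
  exact ⟨c, congrFun hc⟩

theorem pow_toNat_eq_zpow_mul_pow_toNat {G : Type*} [GroupWithZero G] {c : G} (hc : c ≠ 0)
    (n : ℤ) : c ^ n.toNat = c ^ n * c ^ (-n).toNat := by
  rw [← zpow_natCast, ← zpow_natCast, ← zpow_add₀ hc]
  congr 1
  omega

theorem sub_eq_zero_of_laurentMonomial_toNat_eq {l : ℕ} {γ η : Fin l → ℤ} (hγ : ∀ j, γ j ≠ 0)
    {u : Fin l → ℂ} (hu : u ∈ torus l) {P N : ℂ}
    (h : laurentMonomial (η - fun i => ((γ i).toNat : ℤ)) u *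
        ((∏ i, (γ i : ℂ) ^ (γ i).toNat) * P) =
      laurentMonomial (η - fun i => ((-γ i).toNat : ℤ)) u *
        ((∏ i, (γ i : ℂ) ^ (-γ i).toNat) * N)) :
    (∏ j, (γ j : ℂ) ^ γ j) * P - laurentMonomial γ u * N = 0 := by
  have hγ' : ∀ j, (γ j : ℂ) ≠ 0 := fun j => Int.cast_ne_zero.2 (hγ j)
  set A := laurentMonomial (η - fun i => ((γ i).toNat : ℤ)) u
  set C := ∏ i, (γ i : ℂ) ^ (-γ i).toNat
  have hM : A * laurentMonomial γ u = laurentMonomial (η - fun i => ((-γ i).toNat : ℤ)) u := by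
    rw [← laurentMonomial_add hu]
    congr 1
    funext i
    simp only [Pi.add_apply, Pi.sub_apply]
    omega
  have hC : ∏ i, (γ i : ℂ) ^ (γ i).toNat = (∏ j, (γ j : ℂ) ^ γ j) * C := by
    rw [← prod_mul_distrib]
    exact prod_congr rfl fun i _ => pow_toNat_eq_zpow_mul_pow_toNat (hγ' i) (γ i)
  have hC0 : C ≠ 0 := prod_ne_zero_iff.2 fun i _ => pow_ne_zero _ (hγ' i)
  rw [hC, ← hM] at h
  have h0 : (A * C) * ((∏ j, (γ j : ℂ) ^ γ j) * P - laurentMonomial γ u * N) = 0 := by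
    linear_combination h
  exact (mul_eq_zero.1 h0).resolve_left (mul_ne_zero (laurentMonomial_ne_zero hu) hC0)

/-- **Reduction of the circuit GKZ system to a hypergeometric ODE.**
Suppose `g`, analytic on the torus `(ℂ^×)^l`, satisfies the Euler equations
`∑_j θ_j g = −β₀ g` and `∑_j m_{ij} θ_j g = −β_i g` (`θ_j = u_j ∂/∂u_j`), where
the joint kernel of `(1,…,1)` and the rows of `(m_{ij})` on `ℂ^l` is spanned by
the (primitive, nowhere-zero) integer vector `γ`, and `η ∈ ℤ^l` solves
`∑ η_j = −β₀`, `∑ m_{ij} η_j = −β_i`.  Then `g(u) = u^η h(u^γ)` for a function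
`h` of one variable, analytic on `ℂ^×`; and if moreover
`∏_{γ_j>0} ∂_j^{γ_j} g = ∏_{γ_j<0} ∂_j^{−γ_j} g`, then `h` is annihilated by
`Γ ∏_{γ_i>0} ∏_{j<γ_i} (θ + (η_i−j)/γ_i) − z ∏_{γ_i<0} ∏_{j<−γ_i} (θ + (η_i−j)/γ_i)`
with `Γ = ∏ γ_i^{γ_i}`. -/
theorem gkz_reduction_to_hypergeometric (l d : ℕ)
    (γ η : Fin l → ℤ) (hγ0 : ∀ j, γ j ≠ 0) (hgcd : Finset.univ.gcd γ = 1)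
    (m : Fin d → Fin l → ℂ) (β0 : ℂ) (βv : Fin d → ℂ)
    (hker : ∀ w : Fin l → ℂ,
      ((∑ j, w j = 0) ∧ ∀ i, ∑ j, m i j * w j = 0) ↔
        ∃ c : ℂ, w = fun j => c * (γ j : ℂ))
    (hη0 : (∑ j, (η j : ℂ)) = -β0)
    (hηi : ∀ i, (∑ j, m i j * (η j : ℂ)) = -βv i)
    (g : (Fin l → ℂ) → ℂ)
    (hg : ∀ u : Fin l → ℂ, (∀ j, u j ≠ 0) → AnalyticAt ℂ g u)
    (hE0 : ∀ u : Fin l → ℂ, (∀ j, u j ≠ 0) →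
      (∑ j, u j * partialDeriv l j g u) = -β0 * g u)
    (hEi : ∀ u : Fin l → ℂ, (∀ j, u j ≠ 0) →
      ∀ i, (∑ j, m i j * (u j * partialDeriv l j g u)) = -βv i * g u) :
    ∃ h : ℂ → ℂ, (∀ z : ℂ, z ≠ 0 → AnalyticAt ℂ h z) ∧
      (∀ u : Fin l → ℂ, (∀ j, u j ≠ 0) →
        g u = (∏ j, u j ^ η j) * h (∏ j, u j ^ γ j)) ∧
      ((∀ u : Fin l → ℂ, (∀ j, u j ≠ 0) →
          boxOp l (fun j => (γ j).toNat) g u = boxOp l (fun j => (-γ j).toNat) g u) →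
        ∀ z : ℂ, z ≠ 0 →
          (∏ j, (γ j : ℂ) ^ γ j) *
              ((shiftList l γ η fun j => (γ j).toNat).foldr thetaAdd h) z -
            z * ((shiftList l γ η fun j => (-γ j).toNat).foldr thetaAdd h) z = 0) := by
  obtain ⟨h, hh, hrep⟩ := exists_eqOn_laurentMonomial_mul_comp hgcd hg fun u hu =>
    exists_sub_mul_eq_mul_of_kernel (fun w => (hker w).1) hη0 hηi (hE0 u hu) (hEi u hu)
  refine ⟨h, hh, fun u hu => hrep hu, fun hbox z hz => ?_⟩
  obtain ⟨a, ha⟩ := univ.gcd_eq_sum_mul γ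
  set u : Fin l → ℂ := fun j => z ^ a j
  have hu : u ∈ torus l := fun j => zpow_ne_zero _ hz
  have hz' : laurentMonomial γ u = z := by
    rw [laurentMonomial_zpow hz]
    simp_rw [mul_comm (a _), ← ha, hgcd, zpow_one]
  have key := hbox u hu
  rw [boxOp_eqOn hh hrep hγ0 _ hu, boxOp_eqOn hh hrep hγ0 _ hu] at key
  simpa only [hz'] using sub_eq_zero_of_laurentMonomial_toNat_eq hγ0 hu key
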